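/- arXiv:2312.13879 — 4 statements merged into one kernel-verified Lean document; each statement's English description precedes it below -/
import Mathlib

section
/- Let V be a real Hilbert space and A : V → V* a bounded linear operator satisfying ⟨Au, u⟩ ≥ C_a‖u‖² for all u, with C_a > 0, and ‖Au‖ ≤ C_b‖u‖. Let Φ : V → V be Lipschitz with constant C_L < C_a/C_b. Then there exist constants C > 0 and c̃ ∈ [0,1) such that for all u, v, φ, ψ ∈ V, ⟨A(u − v), u − Φ(φ) − v + Φ(ψ)⟩ ≥ C(‖u − v‖² − c̃²‖φ − ψ‖²). In fact one may take C = C_a/2 and c̃ = C_b C_L / C_a. -/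
/-! Write `w = u - v` and `d = Φ φ - Φ ψ`. Coercivity bounds `⟪A w, w⟫` below by `Ca ‖w‖²`, while
Cauchy–Schwarz, boundedness of `A` and the Lipschitz bound give `⟪A w, d⟫ ≤ Cb CL ‖w‖ ‖φ - ψ‖`.
Young's inequality `k x y ≤ Ca x² / 2 + k² y² / (2 Ca)` with `k = Cb CL` absorbs the cross term. -/

open RealInnerProductSpace

theorem half_mul_sq_sub_le_mul_sq_sub_mul {a : ℝ} (ha : 0 < a) (k x y : ℝ) :
    a / 2 * (x ^ 2 - (k / a) ^ 2 * y ^ 2) ≤ a * x ^ 2 - k * x * y := by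
  have hsq : 0 ≤ (a * x - k * y) ^ 2 / (2 * a) := by positivity
  have hid : a * x ^ 2 - k * x * y - a / 2 * (x ^ 2 - (k / a) ^ 2 * y ^ 2)
      = (a * x - k * y) ^ 2 / (2 * a) := by
    field_simp
    ring
  linarith

theorem mul_sq_sub_le_inner_sub {V : Type*} [NormedAddCommGroup V] [InnerProductSpace ℝ V]
    {A : V →L[ℝ] V} {Ca Cb δ : ℝ} {w d : V}
    (hcoer : Ca * ‖w‖ ^ 2 ≤ ⟪A w, w⟫) (hbdd : ‖A w‖ ≤ Cb * ‖w‖) (hd : ‖d‖ ≤ δ) :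
    Ca * ‖w‖ ^ 2 - Cb * ‖w‖ * δ ≤ ⟪A w, w - d⟫ := by
  have hcross : ⟪A w, d⟫ ≤ Cb * ‖w‖ * δ :=
    calc ⟪A w, d⟫ ≤ ‖A w‖ * ‖d‖ := real_inner_le_norm _ _
      _ ≤ Cb * ‖w‖ * δ :=
        mul_le_mul hbdd hd (norm_nonneg _) ((norm_nonneg _).trans hbdd)
  rw [inner_sub_right]
  linarith

theorem stmt_6_general {V : Type*} [NormedAddCommGroup V] [InnerProductSpace ℝ V]
    (A : V →L[ℝ] V) (Ca Cb CL : ℝ)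
    (hCa : 0 < Ca)
    (hcoer : ∀ u : V, Ca * ‖u‖ ^ 2 ≤ ⟪A u, u⟫)
    (hbdd : ∀ u : V, ‖A u‖ ≤ Cb * ‖u‖)
    (Φ : V → V) (hCL0 : 0 ≤ CL) (hCL : CL < Ca / Cb)
    (hΦ : ∀ x y : V, ‖Φ x - Φ y‖ ≤ CL * ‖x - y‖) :
    ∃ C : ℝ, 0 < C ∧ ∃ c : ℝ, 0 ≤ c ∧ c < 1 ∧ C = Ca / 2 ∧ c = Cb * CL / Ca ∧
      ∀ u v φ ψ : V,
        C * (‖u - v‖ ^ 2 - c ^ 2 * ‖φ - ψ‖ ^ 2) ≤ ⟪A (u - v), u - Φ φ - v + Φ ψ⟫ := by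
  have hCb : 0 < Cb := (div_pos_iff_of_pos_left hCa).mp (hCL0.trans_lt hCL)
  refine ⟨Ca / 2, half_pos hCa, Cb * CL / Ca, by positivity,
    (div_lt_one hCa).mpr ((lt_div_iff₀' hCb).mp hCL), rfl, rfl, fun u v φ ψ => ?_⟩
  have hsplit : u - Φ φ - v + Φ ψ = (u - v) - (Φ φ - Φ ψ) := by abel
  calc Ca / 2 * (‖u - v‖ ^ 2 - (Cb * CL / Ca) ^ 2 * ‖φ - ψ‖ ^ 2)
      ≤ Ca * ‖u - v‖ ^ 2 - Cb * CL * ‖u - v‖ * ‖φ - ψ‖ :=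
        half_mul_sq_sub_le_mul_sq_sub_mul hCa _ _ _
    _ = Ca * ‖u - v‖ ^ 2 - Cb * ‖u - v‖ * (CL * ‖φ - ψ‖) := by ring
    _ ≤ ⟪A (u - v), u - Φ φ - v + Φ ψ⟫ :=
        hsplit ▸ mul_sq_sub_le_inner_sub (hcoer _) (hbdd _) (hΦ φ ψ)

theorem stmt_6 {V : Type*} [NormedAddCommGroup V] [InnerProductSpace ℝ V]
    (A : V →L[ℝ] V) (Ca Cb CL : ℝ)
    (hCa : 0 < Ca) (hCb : 0 < Cb)
    (hcoer : ∀ u : V, Ca * ‖u‖ ^ 2 ≤ ⟪A u, u⟫)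
    (hbdd : ∀ u : V, ‖A u‖ ≤ Cb * ‖u‖)
    (Φ : V → V) (hCL0 : 0 ≤ CL) (hCL : CL < Ca / Cb)
    (hΦ : ∀ x y : V, ‖Φ x - Φ y‖ ≤ CL * ‖x - y‖) :
    ∃ C : ℝ, 0 < C ∧ ∃ c : ℝ, 0 ≤ c ∧ c < 1 ∧ C = Ca / 2 ∧ c = Cb * CL / Ca ∧
      ∀ u v φ ψ : V,
        C * (‖u - v‖ ^ 2 - c ^ 2 * ‖φ - ψ‖ ^ 2) ≤ ⟪A (u - v), u - Φ φ - v + Φ ψ⟫ :=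
  stmt_6_general A Ca Cb CL hCa hcoer hbdd Φ hCL0 hCL hΦ
end

section
/- Let V be a real Hilbert space, A : V → V* bounded (constant C_b) and coercive (constant C_a > 0) and linear, and let B : V → V* be a monotone operator. Suppose u, v ∈ V, φ, ψ, f, g are such that Au + B(u − φ) = f and Av + B(v − ψ) = g (as elements of V*). Then ‖u − v‖ ≤ (√2/C_a)‖f − g‖_{V*} + (√2 C_b/C_a)‖ψ − φ‖. -/
open RealInnerProductSpace

lemma aux_quad_7 (x s r : ℝ) (hx : 0 ≤ x) (hs : 0 ≤ s) (hr2 : r ^ 2 = 2)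
    (hr : 1 ≤ r) (hr74 : r ≤ 7 / 4) (hq : x ^ 2 ≤ x * s + s ^ 2 / 4) :
    x ≤ r * s := by
  by_contra h
  push_neg at h
  have ht : 0 < x - r * s := by linarith
  have e1 : 0 ≤ (7 / 4 - r) * s ^ 2 := mul_nonneg (by linarith) (sq_nonneg s)
  have e2 : 0 ≤ (2 * r - 1) * (s * (x - r * s)) :=
    mul_nonneg (by linarith) (mul_nonneg hs ht.le)
  have e3 : 0 < (x - r * s) ^ 2 := by positivity
  have hr2s : r ^ 2 * s ^ 2 = 2 * s ^ 2 := by rw [hr2]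
  nlinarith [e1, e2, e3, hq, hr2s]

theorem stmt_7 {V : Type*} [NormedAddCommGroup V] [InnerProductSpace ℝ V]
    (A : V →L[ℝ] V) (Ca Cb : ℝ) (hCa : 0 < Ca)
    (hcoer : ∀ u : V, Ca * ‖u‖ ^ 2 ≤ ⟪A u, u⟫)
    (hbdd : ∀ u v : V, ⟪A u, v⟫ ≤ Cb * ‖u‖ * ‖v‖)
    (B : V → V) (hmono : ∀ x y : V, 0 ≤ ⟪B x - B y, x - y⟫)
    (u v φ ψ f g : V)
    (hu : A u + B (u - φ) = f) (hv : A v + B (v - ψ) = g) :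
    ‖u - v‖ ≤ (Real.sqrt 2 / Ca) * ‖f - g‖ + (Real.sqrt 2 * Cb / Ca) * ‖ψ - φ‖ := by
  by_cases hs : Subsingleton V
  · have h1 : u = v := Subsingleton.elim u v
    have h2 : f = g := Subsingleton.elim f g
    have h3 : ψ = φ := Subsingleton.elim ψ φ
    simp [h1, h2, h3]
  · rw [not_subsingleton_iff_nontrivial] at hs
    obtain ⟨x, hx⟩ := exists_ne (0 : V)
    have hxpos : (0:ℝ) < ‖x‖ := norm_pos_iff.mpr hx
    have hCb : Ca ≤ Cb := by
      have h1 := hcoer x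
      have h2 := hbdd x x
      nlinarith [mul_pos hxpos hxpos, sq_nonneg ‖x‖]
    set W := ‖u - v‖ with hW
    set F := ‖f - g‖ with hF
    set D := ‖ψ - φ‖ with hD
    have hWn : 0 ≤ W := norm_nonneg _
    have hFn : 0 ≤ F := norm_nonneg _
    have hDn : 0 ≤ D := norm_nonneg _
    set z := (u - φ) - (v - ψ) with hz
    have hBsub : B (u - φ) - B (v - ψ) = (f - g) - A (u - v) := by
      have h1 : B (u - φ) = f - A u := by rw [← hu]; abel
      have h2 : B (v - ψ) = g - A v := by rw [← hv]; abel
      rw [h1, h2, map_sub]; abel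
    have hmz := hmono (u - φ) (v - ψ)
    rw [hBsub] at hmz
    have h1 : ⟪A (u - v), z⟫ ≤ ⟪f - g, z⟫ := by
      rw [inner_sub_left] at hmz
      linarith
    have hdecomp : (u - v) = z + (φ - ψ) := by rw [hz]; abel
    have h2 : ⟪A (u - v), u - v⟫ = ⟪A (u - v), z⟫ + ⟪A (u - v), φ - ψ⟫ := by
      nth_rewrite 2 [hdecomp]
      rw [inner_add_right]
    have hznorm : ‖z‖ ≤ W + D := by
      have : z = (u - v) + (ψ - φ) := by rw [hz]; abel
      rw [this]
      exact norm_add_le _ _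
    have h3 : ⟪f - g, z⟫ ≤ F * (W + D) := by
      calc ⟪f - g, z⟫ ≤ ‖f - g‖ * ‖z‖ := real_inner_le_norm _ _
        _ ≤ F * (W + D) := by apply mul_le_mul_of_nonneg_left hznorm hFn
    have h4 : ⟪A (u - v), φ - ψ⟫ ≤ Cb * W * D := by
      have := hbdd (u - v) (φ - ψ)
      rwa [norm_sub_rev φ ψ, ← hW, ← hD] at this
    have hkey : Ca * W ^ 2 ≤ F * (W + D) + Cb * W * D := by
      have := hcoer (u - v)
      rw [h2] at this
      linarith
    have hr2 : Real.sqrt 2 ^ 2 = 2 := Real.sq_sqrt (by norm_num)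
    have hr1 : 1 ≤ Real.sqrt 2 := by
      nlinarith [Real.sqrt_nonneg 2]
    have hSnn : 0 ≤ F + Cb * D :=
      add_nonneg hFn (mul_nonneg (le_trans (le_of_lt hCa) hCb) hDn)
    have hq : (Ca * W) ^ 2 ≤ (Ca * W) * (F + Cb * D) + (F + Cb * D) ^ 2 / 4 := by
      nlinarith [sq_nonneg (F - Cb * D), mul_nonneg hFn hDn, hkey, hCb,
        mul_le_mul_of_nonneg_left hkey (le_of_lt hCa)]
    have hr74 : Real.sqrt 2 ≤ 7 / 4 := by
      nlinarith [Real.sqrt_nonneg 2]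
    have hmain : Ca * W ≤ Real.sqrt 2 * (F + Cb * D) :=
      aux_quad_7 _ _ _ (mul_nonneg hCa.le hWn) hSnn hr2 hr1 hr74 hq
    rw [div_mul_eq_mul_div, div_mul_eq_mul_div, ← add_div,
      le_div_iff₀ hCa]
    linarith [hmain]
end

section
/- Let Ω be a measure space and H = L²(Ω). Let V ⊆ H be a Hilbert space with continuous embedding, A : V → V* linear, bounded, coercive and T-monotone (⟨Au⁺, u⁻⟩ ≤ 0 for all u ∈ V, where u⁺ is the pointwise positive part and u⁻ = u⁺ − u, and V is closed under positive parts). Let ρ > 0, let Φ : H → V be increasing, and let σ_ρ act pointwise. If f ≥ g in V*, φ ≥ ψ a.e., u solves Au + (1/ρ)σ_ρ(u − Φ(φ)) = f and v solves Av + (1/ρ)σ_ρ(v − Φ(ψ)) = g, then v ≤ u a.e. -/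
/-! Test the difference of the two equations against `w = (v - u)⁺ = (u - v)⁺ - (u - v)`.
Where `w > 0` we have `v > u`, and with `Φ ψ ≤ Φ φ` the monotonicity of `σ_ρ` makes the penalty term
of `v` dominate that of `u`; together with `g ≤ f` on `w ≥ 0` this gives `A (v - u) w ≤ 0`.
T-monotonicity gives `A (u - v)⁺ w ≤ 0`, so `A w w ≤ 0`, and coercivity forces `w = 0`. -/

open MeasureTheory

noncomputable def sig (ρ r : ℝ) : ℝ :=
  if r ≤ 0 then 0 else if r < ρ then r ^ 2 / (2 * ρ) else r - ρ / 2

section Sig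

variable {ρ : ℝ}

lemma sig_nonneg (hρ : 0 < ρ) (r : ℝ) : 0 ≤ sig ρ r := by
  unfold sig
  split_ifs with h0 h1
  · rfl
  · positivity
  · linarith

lemma sig_mono (hρ : 0 < ρ) : Monotone (sig ρ) := by
  intro r s hrs
  rcases le_or_gt r 0 with hr | hr
  · simpa [sig, hr] using sig_nonneg hρ s
  have hs : ¬ s ≤ 0 := not_le.mpr (hr.trans_le hrs)
  have h2ρ : (0 : ℝ) < 2 * ρ := by linarith
  simp only [sig, not_le.mpr hr, hs, if_false]
  split_ifs with h1 h2 h2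
  · gcongr
  · rw [div_le_iff₀ h2ρ]
    nlinarith [mul_pos hr (sub_pos.mpr h1), mul_nonneg hρ.le (sub_nonneg.mpr (not_lt.mp h2))]
  · exact absurd (hrs.trans_lt h2) h1
  · linarith

lemma abs_sig_le (hρ : 0 < ρ) (r : ℝ) : |sig ρ r| ≤ |r| := by
  rw [abs_of_nonneg (sig_nonneg hρ r)]
  unfold sig
  split_ifs with h0 h1
  · exact abs_nonneg r
  · rw [abs_of_pos (not_le.mp h0), div_le_iff₀ (by linarith)]
    nlinarith [mul_pos (not_le.mp h0) (sub_pos.mpr h1), mul_pos hρ (not_le.mp h0)]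
  · rw [abs_of_pos (not_le.mp h0)]; linarith

lemma sig_sub_mul_posPart_le (hρ : 0 < ρ) {a b p q : ℝ} (hqp : q ≤ p) :
    sig ρ (a - p) * ((b - a) ⊔ 0) ≤ sig ρ (b - q) * ((b - a) ⊔ 0) := by
  rcases le_or_gt b a with hba | hab
  · simp [sup_eq_right.mpr (sub_nonpos.mpr hba)]
  · exact mul_le_mul_of_nonneg_right (sig_mono hρ (by linarith)) le_sup_right

end Sig

section Penalty

variable {Ω : Type*} [MeasurableSpace Ω] {μ : Measure Ω} {ρ : ℝ}

lemma integrable_sig_mul (hρ : 0 < ρ) (h k : Lp ℝ 2 μ) :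
    Integrable (fun x => sig ρ (h x) * k x) μ := by
  have hhk : Integrable (fun x => h x * k x) μ := by
    simpa [RCLike.inner_apply, mul_comm] using L2.integrable_inner (𝕜 := ℝ) h k
  refine hhk.mono ?_ (Filter.Eventually.of_forall fun x => ?_)
  · exact ((sig_mono hρ).measurable.comp_aemeasurable
      (Lp.aestronglyMeasurable h).aemeasurable).aestronglyMeasurable.mul (Lp.aestronglyMeasurable k)
  · simp only [norm_mul, Real.norm_eq_abs]
    exact mul_le_mul_of_nonneg_right (abs_sig_le hρ _) (abs_nonneg _)

lemma integral_sig_sub_mul_posPart_le (hρ : 0 < ρ) (a b p q : Lp ℝ 2 μ) (hqp : q ≤ p) :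
    ∫ x, sig ρ ((a - p) x) * ((b - a) ⊔ 0 : Lp ℝ 2 μ) x ∂μ
      ≤ ∫ x, sig ρ ((b - q) x) * ((b - a) ⊔ 0 : Lp ℝ 2 μ) x ∂μ := by
  refine integral_mono_ae (integrable_sig_mul hρ _ _) (integrable_sig_mul hρ _ _) ?_
  filter_upwards [(Lp.coeFn_le _ _).mpr hqp, Lp.coeFn_sup (b - a) 0, Lp.coeFn_zero ℝ 2 μ,
    Lp.coeFn_sub a p, Lp.coeFn_sub b q, Lp.coeFn_sub b a] with x hqpx hsup h0 hap hbq hba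
  simp only [hsup, Pi.sup_apply, h0, hap, hbq, hba, Pi.sub_apply, Pi.zero_apply]
  exact sig_sub_mul_posPart_le hρ hqpx

end Penalty

lemma eq_zero_of_coercive {V : Type*} [NormedAddCommGroup V] [NormedSpace ℝ V]
    {A : V →L[ℝ] V →L[ℝ] ℝ} {Ca : ℝ} (hCa : 0 < Ca) (hcoer : ∀ u : V, Ca * ‖u‖ ^ 2 ≤ A u u)
    {w : V} (hw : A w w ≤ 0) : w = 0 := by
  have : Ca * ‖w‖ ^ 2 ≤ 0 := (hcoer w).trans hw
  have : ‖w‖ ^ 2 = 0 := le_antisymm (nonpos_of_mul_nonpos_right this hCa) (sq_nonneg _)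
  simpa using this

theorem stmt_9
    {Ω : Type*} [MeasureSpace Ω]
    {V : Type*} [NormedAddCommGroup V] [InnerProductSpace ℝ V]
    (ι : V →L[ℝ] Lp ℝ 2 (volume : Measure Ω))
    (pos : V → V) (hpos : ∀ u : V, ι (pos u) = (ι u) ⊔ 0)
    (A : V →L[ℝ] V →L[ℝ] ℝ)
    (Ca : ℝ) (hCa : 0 < Ca)
    (hcoer : ∀ u : V, Ca * ‖u‖ ^ 2 ≤ A u u)
    (hTmono : ∀ u : V, A (pos u) (pos u - u) ≤ 0)
    (ρ : ℝ) (hρ : 0 < ρ)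
    (Φ : Lp ℝ 2 (volume : Measure Ω) → V)
    (hΦ : ∀ φ ψ : Lp ℝ 2 (volume : Measure Ω), ψ ≤ φ → ι (Φ ψ) ≤ ι (Φ φ))
    (f g : V →L[ℝ] ℝ)
    (hfg : ∀ w : V, 0 ≤ ι w → g w ≤ f w)
    (φ ψ : Lp ℝ 2 (volume : Measure Ω)) (hφψ : ψ ≤ φ)
    (u v : V)
    (hu : ∀ w : V, A u w + (1 / ρ) * ∫ x, sig ρ ((ι u - ι (Φ φ)) x) * (ι w) x = f w)
    (hv : ∀ w : V, A v w + (1 / ρ) * ∫ x, sig ρ ((ι v - ι (Φ ψ)) x) * (ι w) x = g w) :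
    ι v ≤ ι u := by
  set w := pos (u - v) - (u - v)
  have hιw : ι w = (ι v - ι u) ⊔ 0 := by
    rw [map_sub, hpos, map_sub, sup_sub, sub_self, zero_sub, neg_sub, sup_comm]
  have hpen := integral_sig_sub_mul_posPart_le hρ (ι u) (ι v) _ _ (hΦ φ ψ hφψ)
  rw [← hιw] at hpen
  have hAvu : A (v - u) w ≤ 0 := by
    rw [map_sub A v u, sub_apply]
    linarith [hu w, hv w, hfg w (hιw ▸ le_sup_right),
      mul_le_mul_of_nonneg_left hpen (by positivity : (0 : ℝ) ≤ 1 / ρ)]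
  have hAww : A w w ≤ 0 := by
    have : A w w = A (pos (u - v)) w + A (v - u) w := by
      simp only [w, map_sub, sub_apply]; ring
    linarith [hTmono (u - v)]
  have hsup : (ι v - ι u) ⊔ 0 = 0 := by rw [← hιw, eq_zero_of_coercive hCa hcoer hAww, map_zero]
  exact sub_nonpos.mp (sup_eq_right.mp hsup)
end

section
/- With the setting of the penalised equation: for f ∈ V* and φ ∈ H, if u_ρ solves the penalised PDE Au_ρ + (1/ρ)σ_ρ(u_ρ − Φ(φ)) = f and v solves the obstacle variational inequality v ≤ Φ(φ), ⟨Av − f, v − w⟩ ≤ 0 for all w ∈ V with w ≤ Φ(φ), then v ≤ u_ρ a.e. -/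
open MeasureTheory

theorem stmt_11
    {Ω : Type*} [MeasureSpace Ω]
    {V : Type*} [NormedAddCommGroup V] [InnerProductSpace ℝ V]
    (ι : V →L[ℝ] Lp ℝ 2 (volume : Measure Ω))
    (pos : V → V) (hpos : ∀ u : V, ι (pos u) = (ι u) ⊔ 0)
    (A : V →L[ℝ] V →L[ℝ] ℝ)
    (Ca : ℝ) (hCa : 0 < Ca)
    (hcoer : ∀ u : V, Ca * ‖u‖ ^ 2 ≤ A u u)
    (hTmono : ∀ u : V, A (pos u) (pos u - u) ≤ 0)
    (ρ : ℝ) (hρ : 0 < ρ)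
    (Φ : Lp ℝ 2 (volume : Measure Ω) → V)
    (f : V →L[ℝ] ℝ)
    (φ : Lp ℝ 2 (volume : Measure Ω))
    (uρ v : V)
    (huρ : ∀ w : V, A uρ w + (1 / ρ) * ∫ x, sig ρ ((ι uρ - ι (Φ φ)) x) * (ι w) x = f w)
    (hv1 : ι v ≤ ι (Φ φ))
    (hv2 : ∀ w : V, ι w ≤ ι (Φ φ) → A v (v - w) - f (v - w) ≤ 0) :
    ι v ≤ ι uρ := by
  set m := pos (uρ - v) with hm
  set d := v - uρ + m with hd
  have hιm : ι m = (ι uρ - ι v) ⊔ 0 := by rw [hm, hpos, map_sub]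
  have hιd : ι d = (ι v - ι uρ) + ((ι uρ - ι v) ⊔ 0) := by
    rw [hd, map_add, map_sub, hιm]
  -- Step A: the test function uρ - m is admissible for the VI
  have hA : ι (uρ - m) ≤ ι (Φ φ) := by
    have h1 : ι (uρ - m) ≤ ι v := by
      rw [map_sub, hιm]
      calc ι uρ - (ι uρ - ι v) ⊔ 0 ≤ ι uρ - (ι uρ - ι v) :=
            sub_le_sub_left le_sup_left _
        _ = ι v := by abel
    exact h1.trans hv1
  have hVI := hv2 (uρ - m) hA
  have hd' : v - (uρ - m) = d := by rw [hd]; abel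
  rw [hd'] at hVI
  have hPDE := huρ d
  -- Step B: the penalty integral vanishes
  have hint : (∫ x, sig ρ ((ι uρ - ι (Φ φ)) x) * (ι d) x) = 0 := by
    have hae : (fun x => sig ρ ((ι uρ - ι (Φ φ)) x) * (ι d) x) =ᵐ[volume]
        (0 : Ω → ℝ) := by
      have e0 := Lp.coeFn_sub (ι uρ) (ι (Φ φ))
      have e1 : ⇑(ι d) =ᵐ[volume]
          ⇑(ι v - ι uρ) + ⇑((ι uρ - ι v) ⊔ 0) := by
        rw [hιd]; exact Lp.coeFn_add _ _
      have e2 := Lp.coeFn_sub (ι v) (ι uρ)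
      have e3 := Lp.coeFn_sup (ι uρ - ι v) (0 : Lp ℝ 2 (volume : Measure Ω))
      have e4 := Lp.coeFn_sub (ι uρ) (ι v)
      have e5 := Lp.coeFn_zero (E := ℝ) (p := 2) (μ := (volume : Measure Ω))
      have e6 : ⇑(ι v) ≤ᵐ[volume] ⇑(ι (Φ φ)) := (Lp.coeFn_le _ _).mpr hv1
      filter_upwards [e0, e1, e2, e3, e4, e5, e6] with x h0 h1 h2 h3 h4 h5 h6
      simp only [Pi.add_apply, Pi.sub_apply, Pi.sup_apply, Pi.zero_apply] at *
      rw [h0, h1, h3, h4, h2, h5]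
      set a := ι uρ x
      set b := ι v x
      set c := ι (Φ φ) x
      by_cases hba : b ≤ a
      · have : (a - b) ⊔ 0 = a - b := sup_eq_left.mpr (by linarith)
        rw [this]
        ring_nf
      · have hac : a - c ≤ 0 := by
          push_neg at hba; linarith
        have : sig ρ (a - c) = 0 := by simp [sig, hac]
        rw [this, zero_mul]
    calc (∫ x, sig ρ ((ι uρ - ι (Φ φ)) x) * (ι d) x)
        = ∫ x, (0 : ℝ) := integral_congr_ae hae
      _ = 0 := integral_zero _ _
  -- Step C: combine VI and PDE
  have hfd : f d = A uρ d := by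
    have := huρ d
    rw [hint] at this
    linarith
  have hvd : A v d - A uρ d ≤ 0 := by rw [← hfd]; exact hVI
  -- Step D: T-monotonicity
  have hmd : A m d ≤ 0 := by
    have hT := hTmono (uρ - v)
    have : m - (uρ - v) = d := by rw [hd]; abel
    rwa [← hm, this] at hT
  -- Step E: coercivity forces d = 0
  have hdd : A d d ≤ 0 := by
    have hAd : A d = A v - A uρ + A m := by rw [hd, map_add, map_sub]
    have h' : A d d = (A v d - A uρ d) + A m d := by
      rw [hAd, ContinuousLinearMap.add_apply, ContinuousLinearMap.sub_apply]
    rw [h']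
    linarith
  have hnd : ‖d‖ ^ 2 = 0 := by
    have h1 := hcoer d
    have h2 : 0 ≤ ‖d‖ ^ 2 := sq_nonneg _
    nlinarith
  have hd0 : d = 0 := norm_eq_zero.mp (pow_eq_zero_iff two_ne_zero |>.mp hnd)
  -- Conclusion
  have : ι v - ι uρ + ((ι uρ - ι v) ⊔ 0) = 0 := by
    rw [← hιd, hd0, map_zero]
  have hle : ι v - ι uρ = -((ι uρ - ι v) ⊔ 0) := by
    rw [eq_neg_iff_add_eq_zero]; exact this
  have hnn : (0 : Lp ℝ 2 (volume : Measure Ω)) ≤ (ι uρ - ι v) ⊔ 0 := le_sup_right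
  have : ι v - ι uρ ≤ 0 := by rw [hle]; exact neg_nonpos.mpr hnn
  exact sub_nonpos.mp this
end
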